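/- arXiv:1505.06875 — 2 statements merged into one kernel-verified Lean document; each statement's English description precedes it below -/
import Mathlib

section
/- Let 1 < v ≤ 2 and let b be a natural number. Define G(t,s) = (1/Γ(v)) · [ t^(v−1)(v+b−s)^(v−1)/(v+b−1)^(v−1) − (t−s−1)^(v−1) ] for 0 ≤ s < t−v+1 ≤ b+1, and G(t,s) = (1/Γ(v)) · t^(v−1)(v+b−s)^(v−1)/(v+b−1)^(v−1) for 0 ≤ t−v+1 ≤ s ≤ b+1, where x^(μ) = Γ(x+1)/Γ(x+1−μ). Then G(t,s) ≥ 0 for every t ∈ {v−2, v−1, …, v+b} and s ∈ {0, 1, …, b+1}. -/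
open Classical

/-- The generalized falling factorial `x^(μ) = Γ(x+1)/Γ(x+1−μ)`, with the convention that
`x^(μ) = 0` when `x+1−μ` is a pole of the Gamma function but `x+1` is not. -/
noncomputable def ffact (x μ : ℝ) : ℝ :=
  if (∃ n : ℕ, x + 1 - μ = -(n : ℝ)) ∧ ¬(∃ n : ℕ, x + 1 = -(n : ℝ)) then 0
  else Real.Gamma (x + 1) / Real.Gamma (x + 1 - μ)

/-- The Green's function of the discrete fractional boundary value problem, defined
piecewise via falling factorials. -/
noncomputable def G (v : ℝ) (b : ℕ) (t s : ℝ) : ℝ :=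
  if s < t - v + 1 then
    (1 / Real.Gamma v) *
      (ffact t (v - 1) * ffact (v + b - s) (v - 1) / ffact (v + b - 1) (v - 1)
        - ffact (t - s - 1) (v - 1))
  else
    (1 / Real.Gamma v) *
      (ffact t (v - 1) * ffact (v + b - s) (v - 1) / ffact (v + b - 1) (v - 1))

/-- Auxiliary function `f n = Γ(v+n)/n!`. -/
noncomputable def fv (v : ℝ) (n : ℕ) : ℝ := Real.Gamma (v + n) / (n.factorial : ℝ)

lemma fv_pos {v : ℝ} (hv : 0 < v) (n : ℕ) : 0 < fv v n := by
  apply div_pos (Real.Gamma_pos_of_pos (by positivity))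
  exact_mod_cast n.factorial_pos

lemma fv_succ {v : ℝ} (hv : 0 < v) (n : ℕ) :
    fv v (n + 1) = fv v n * ((v + n) / (n + 1)) := by
  have h1 : v + ((n : ℝ) + 1) = (v + n) + 1 := by ring
  have h2 : Real.Gamma ((v + n) + 1) = (v + n) * Real.Gamma (v + n) :=
    Real.Gamma_add_one (by positivity)
  simp only [fv, Nat.cast_succ, Nat.factorial_succ, Nat.cast_mul, h1, h2]
  have hf : ((n.factorial : ℝ)) ≠ 0 := by exact_mod_cast n.factorial_pos.ne'
  field_simp

lemma ratio_one_le {v : ℝ} (hv : 1 ≤ v) (n : ℕ) : 1 ≤ (v + n) / ((n : ℝ) + 1) := by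
  rw [le_div_iff₀ (by positivity)]
  have : (0:ℝ) ≤ n := n.cast_nonneg
  linarith

lemma ratio_anti {v : ℝ} (hv : 1 ≤ v) {a b : ℕ} (h : a ≤ b) :
    (v + b) / ((b : ℝ) + 1) ≤ (v + a) / ((a : ℝ) + 1) := by
  have hab : (a : ℝ) ≤ b := by exact_mod_cast h
  rw [div_le_div_iff₀ (by positivity) (by positivity)]
  nlinarith

lemma fv_mono {v : ℝ} (hv : 1 ≤ v) : Monotone (fv v) := by
  have hv0 : 0 < v := by linarith
  apply monotone_nat_of_le_succ
  intro n
  rw [fv_succ hv0 n]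
  nlinarith [fv_pos hv0 n, ratio_one_le hv n]

/-- Key inequality: `f m * f (s + c) ≤ f (m + s + 1) * f (c + 1)` for `m ≤ c + 1`. -/
lemma fv_key {v : ℝ} (hv : 1 ≤ v) :
    ∀ s m c : ℕ, m ≤ c + 1 → fv v m * fv v (s + c) ≤ fv v (m + s + 1) * fv v (c + 1) := by
  have hv0 : 0 < v := by linarith
  intro s
  induction s with
  | zero =>
    intro m c h
    simp only [Nat.zero_add, Nat.add_zero]
    exact mul_le_mul (fv_mono hv (Nat.le_succ m)) (fv_mono hv (Nat.le_succ c))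
      (fv_pos hv0 c).le (fv_pos hv0 (m + 1)).le
  | succ s ih =>
    intro m c h
    rcases Nat.lt_or_ge m (c + 1) with hlt | hge
    · -- m ≤ c
      have hmc : m ≤ c := Nat.lt_succ_iff.mp hlt
      have h1 := ih (m + 1) c (by omega)
      have e1 : s + 1 + c = (s + c) + 1 := by omega
      have e2 : m + 1 + s + 1 = m + (s + 1) + 1 := by omega
      rw [e1, fv_succ hv0 (s + c)]
      rw [e2] at h1
      have h2 : (v + (s + c : ℕ)) / (((s + c : ℕ) : ℝ) + 1) ≤ (v + m) / ((m : ℝ) + 1) :=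
        ratio_anti hv (by omega)
      have h3 : fv v m * ((v + m) / ((m : ℝ) + 1)) = fv v (m + 1) := (fv_succ hv0 m).symm
      calc fv v m * (fv v (s + c) * ((v + (s + c : ℕ)) / (((s + c : ℕ) : ℝ) + 1)))
          ≤ fv v m * (fv v (s + c) * ((v + m) / ((m : ℝ) + 1))) := by
            apply mul_le_mul_of_nonneg_left _ (fv_pos hv0 m).le
            exact mul_le_mul_of_nonneg_left h2 (fv_pos hv0 (s + c)).le
        _ = fv v (m + 1) * fv v (s + c) := by rw [← h3]; ring
        _ ≤ fv v (m + (s + 1) + 1) * fv v (c + 1) := h1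
    · -- m = c + 1
      have hm : m = c + 1 := le_antisymm h hge
      subst hm
      rw [mul_comm]
      exact mul_le_mul (fv_mono hv (by omega)) (fv_mono hv (by omega))
        (fv_pos hv0 (c + 1)).le (fv_pos hv0 (c + 1 + (s + 1) + 1)).le

lemma ffact_of_pos {x μ : ℝ} (h : 0 < x + 1 - μ) :
    ffact x μ = Real.Gamma (x + 1) / Real.Gamma (x + 1 - μ) := by
  rw [ffact, if_neg]
  rintro ⟨⟨n, hn⟩, -⟩
  have : (0:ℝ) ≤ (n : ℝ) := n.cast_nonneg
  linarith

lemma ffact_eq_fv {v : ℝ} (hv : 0 < v) (n : ℕ) :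
    ffact (v + n - 1) (v - 1) = fv v n := by
  have h1 : (v + n - 1) + 1 - (v - 1) = (n : ℝ) + 1 := by ring
  have h2 : (v + n - 1) + 1 = v + n := by ring
  rw [ffact_of_pos (by rw [h1]; positivity), h1, h2, fv]
  congr 1
  exact_mod_cast Real.Gamma_nat_eq_factorial n

/-- Non-negativity of the Green's function on the grid
`t ∈ {v−2,…,v+b}`, `s ∈ {0,…,b+1}`. -/
theorem stmt_3 (v : ℝ) (hv1 : 1 < v) (hv2 : v ≤ 2) (b : ℕ) :
    ∀ k : ℕ, k ≤ b + 2 → ∀ s : ℕ, s ≤ b + 1 → 0 ≤ G v b (v - 2 + k) (s : ℝ) := by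
  have hv0 : 0 < v := by linarith
  have hv1' : 1 ≤ v := hv1.le
  have hΓv : 0 < Real.Gamma v := Real.Gamma_pos_of_pos hv0
  intro k hk s hs
  -- rewrite the three "standard" ffact values
  have hB : ffact (v + b - 1) (v - 1) = fv v b := ffact_eq_fv hv0 b
  have hA : ffact (v + b - s) (v - 1) = fv v (b + 1 - s) := by
    have hcast : v + ((b + 1 - s : ℕ) : ℝ) - 1 = v + b - s := by
      have : ((b + 1 - s : ℕ) : ℝ) = (b : ℝ) + 1 - s := by
        push_cast [Nat.cast_sub (by omega : s ≤ b + 1)]; ring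
      rw [this]; ring
    rw [← hcast, ffact_eq_fv hv0]
  have hBpos := fv_pos hv0 b
  have hApos := fv_pos hv0 (b + 1 - s)
  rcases Nat.eq_zero_or_pos k with hk0 | hkpos
  · -- k = 0 : t = v - 2, ffact t (v-1) = 0 and we are in the second branch
    subst hk0
    have ht0 : ffact (v - 2 + (0:ℕ)) (v - 1) = 0 := by
      rw [ffact, if_pos]
      constructor
      · exact ⟨0, by push_cast; ring⟩
      · rintro ⟨n, hn⟩
        have : (0:ℝ) ≤ (n : ℝ) := n.cast_nonneg
        push_cast at hn
        linarith
    have hbranch : ¬ ((s : ℝ) < (v - 2 + (0:ℕ)) - v + 1) := by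
      push_cast
      have : (0:ℝ) ≤ (s : ℝ) := s.cast_nonneg
      intro h; linarith
    rw [G, if_neg hbranch, ht0]
    simp
  · -- k ≥ 1
    have hT : ffact (v - 2 + k) (v - 1) = fv v (k - 1) := by
      have hcast : v + ((k - 1 : ℕ) : ℝ) - 1 = v - 2 + k := by
        have : ((k - 1 : ℕ) : ℝ) = (k : ℝ) - 1 := by
          push_cast [Nat.cast_sub (by omega : 1 ≤ k)]; ring
        rw [this]; ring
      rw [← hcast, ffact_eq_fv hv0]
    have hTpos := fv_pos hv0 (k - 1)
    by_cases hbr : (s : ℝ) < (v - 2 + k) - v + 1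
    · -- first branch: s + 2 ≤ k
      have hsk : s + 2 ≤ k := by
        have : (s : ℝ) < (k : ℝ) - 1 := by linarith [hbr]
        have : (s : ℝ) + 1 < (k : ℝ) := by linarith
        exact_mod_cast by exact_mod_cast Nat.add_one_le_iff.mpr (by exact_mod_cast this)
      have hsb : s ≤ b := by omega
      have hD : ffact ((v - 2 + k) - s - 1) (v - 1) = fv v (k - s - 2) := by
        have hcast : v + ((k - s - 2 : ℕ) : ℝ) - 1 = (v - 2 + k) - s - 1 := by
          have : ((k - s - 2 : ℕ) : ℝ) = (k : ℝ) - s - 2 := by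
            push_cast [Nat.cast_sub (show 2 ≤ k - s by omega),
              Nat.cast_sub (show s ≤ k by omega)]
            ring
          rw [this]; ring
        rw [← hcast, ffact_eq_fv hv0]
      rw [G, if_pos hbr, hT, hA, hB, hD]
      have hkey := fv_key hv1' s (k - s - 2) (b - s) (by omega)
      have e1 : k - s - 2 + s + 1 = k - 1 := by omega
      have e2 : s + (b - s) = b := by omega
      have e3 : b - s + 1 = b + 1 - s := by omega
      rw [e1, e2, e3] at hkey
      have hdiv : fv v (k - s - 2) ≤ fv v (k - 1) * fv v (b + 1 - s) / fv v b := by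
        rw [le_div_iff₀ hBpos]
        linarith [hkey]
      have : 0 ≤ fv v (k - 1) * fv v (b + 1 - s) / fv v b - fv v (k - s - 2) := by
        linarith
      positivity
    · -- second branch
      rw [G, if_neg hbr, hT, hA, hB]
      positivity
end

section
/- For v ∈ (1,2], b ∈ ℕ, and s ∈ {0,…,b}, the diagonal value of the Green's function satisfies G(s+v−1, s) = (1/Γ(v)) · (s+v−1)^(v−1) (v+b−s)^(v−1) / (v+b−1)^(v−1) > 0, where x^(μ) = Γ(x+1)/Γ(x+1−μ). -/
open Classical

lemma ffact_pos {x mu : ℝ} (h1 : 0 < x + 1) (h2 : 0 < x + 1 - mu) : 0 < ffact x mu := by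
  unfold ffact
  rw [if_neg]
  · exact div_pos (Real.Gamma_pos_of_pos h1) (Real.Gamma_pos_of_pos h2)
  · rintro ⟨⟨n, hn⟩, -⟩
    have : (0:ℝ) ≤ (n:ℝ) := n.cast_nonneg
    linarith

/-- The diagonal value of the Green's function:
`G(s+v−1, s) = (1/Γ(v)) (s+v−1)^(v−1) (v+b−s)^(v−1) / (v+b−1)^(v−1) > 0`
for `v ∈ (1,2]`, `b ∈ ℕ`, `s ∈ {0,…,b}`. -/
theorem stmt_15 (v : ℝ) (hv1 : 1 < v) (hv2 : v ≤ 2) (b s : ℕ) (hs : s ≤ b) :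
    G v b ((s : ℝ) + v - 1) (s : ℝ)
        = (1 / Real.Gamma v) *
            (ffact ((s : ℝ) + v - 1) (v - 1) * ffact (v + b - s) (v - 1)
              / ffact (v + b - 1) (v - 1)) ∧
      0 < G v b ((s : ℝ) + v - 1) (s : ℝ) := by
  have hG : G v b ((s : ℝ) + v - 1) (s : ℝ)
      = (1 / Real.Gamma v) *
          (ffact ((s : ℝ) + v - 1) (v - 1) * ffact (v + b - s) (v - 1)
            / ffact (v + b - 1) (v - 1)) := by
    unfold G
    rw [if_neg]
    push_neg
    linarith
  refine ⟨hG, ?_⟩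
  rw [hG]
  have hsb : (s : ℝ) ≤ (b : ℝ) := by exact_mod_cast hs
  have hs0 : (0:ℝ) ≤ (s : ℝ) := s.cast_nonneg
  have hb0 : (0:ℝ) ≤ (b : ℝ) := b.cast_nonneg
  have h1 : 0 < ffact ((s : ℝ) + v - 1) (v - 1) := ffact_pos (by linarith) (by linarith)
  have h2 : 0 < ffact (v + b - s) (v - 1) := ffact_pos (by linarith) (by linarith)
  have h3 : 0 < ffact (v + b - 1) (v - 1) := ffact_pos (by linarith) (by linarith)
  have hg : 0 < Real.Gamma v := Real.Gamma_pos_of_pos (by linarith)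
  positivity
end
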